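/- If H is a closed subgroup of the additive group (ℚ_p, +), then H = {0}, H = p^kℤ_p for some k ∈ ℤ, or H = ℚ_p. -/

import Mathlib

/-- Approximation lemma: any `x` of norm at most `‖a‖` is within `ε` of an integer
multiple of `a`. -/
lemma padic_approx {p : ℕ} [Fact p.Prime] {a x : ℚ_[p]} (ha : a ≠ 0) (hx : ‖x‖ ≤ ‖a‖)
    {ε : ℝ} (hε : 0 < ε) : ∃ n : ℤ, ‖x - (n : ℤ) • a‖ < ε := by
  have hya : ‖x / a‖ ≤ 1 := by
    rw [norm_div]
    exact div_le_one_of_le₀ hx (norm_nonneg a)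
  set y : ℤ_[p] := ⟨x / a, hya⟩
  have hna : 0 < ‖a‖ := norm_pos_iff.2 ha
  obtain ⟨n, hn⟩ := (PadicInt.denseRange_intCast (p := p)).exists_dist_lt y
    (div_pos hε hna)
  refine ⟨n, ?_⟩
  have h1 : ‖y - (n : ℤ_[p])‖ < ε / ‖a‖ := by
    rwa [dist_eq_norm] at hn
  have h2 : ((y - (n : ℤ_[p]) : ℤ_[p]) : ℚ_[p]) = x / a - (n : ℚ_[p]) := by
    rw [PadicInt.coe_sub]
    push_cast [y]
    ring
  have h3 : ‖x / a - (n : ℚ_[p])‖ < ε / ‖a‖ := by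
    rw [← h2, PadicInt.padic_norm_e_of_padicInt]; exact h1
  have : x - (n : ℤ) • a = (x / a - (n : ℚ_[p])) * a := by
    field_simp
    ring
  rw [this, norm_mul]
  calc ‖x / a - (n : ℚ_[p])‖ * ‖a‖ < (ε / ‖a‖) * ‖a‖ := by
        exact mul_lt_mul_of_pos_right h3 hna
    _ = ε := div_mul_cancel₀ ε hna.ne'

/-- Classification of closed subgroups of `(ℚ_p, +)`: every closed additive
subgroup `H` of `ℚ_p` is either trivial, all of `ℚ_p`, or a fractional ideal `p^k ℤ_p`
(the closed ball `{x : ‖x‖ ≤ p^{-k}}`) for some `k ∈ ℤ`. -/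
theorem statement19 {p : ℕ} [Fact p.Prime]
    (H : AddSubgroup ℚ_[p]) (hH : IsClosed (H : Set ℚ_[p])) :
    (H : Set ℚ_[p]) = {0} ∨ (H : Set ℚ_[p]) = Set.univ ∨
    ∃ k : ℤ, (H : Set ℚ_[p]) = {x : ℚ_[p] | ‖x‖ ≤ (p : ℝ) ^ (-k)} := by
  classical
  have hp1 : (1 : ℝ) < p := by exact_mod_cast (Fact.out : p.Prime).one_lt
  by_cases h0 : ∀ x ∈ H, x = 0
  · left
    ext x
    simp only [SetLike.mem_coe, Set.mem_singleton_iff]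
    exact ⟨h0 x, fun h => h ▸ H.zero_mem⟩
  push_neg at h0
  obtain ⟨a₀, ha₀H, ha₀⟩ := h0
  -- key: multiples of an element of H approximate anything of smaller norm, and H is closed
  have key : ∀ a ∈ H, a ≠ 0 → ∀ x : ℚ_[p], ‖x‖ ≤ ‖a‖ → x ∈ H := by
    intro a haH ha x hx
    have : x ∈ closure (H : Set ℚ_[p]) := by
      rw [Metric.mem_closure_iff]
      intro ε hε
      obtain ⟨n, hn⟩ := padic_approx ha hx hε
      exact ⟨(n : ℤ) • a, H.zsmul_mem haH n, by rwa [dist_eq_norm]⟩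
    rwa [hH.closure_eq] at this
  by_cases hb : ∃ C : ℤ, ∀ x ∈ H, ‖x‖ ≤ (p : ℝ) ^ C
  · -- bounded: valuations bounded below, take the minimum
    right; right
    obtain ⟨C, hC⟩ := hb
    -- the set of valuations of nonzero elements of H
    have hSne : ∃ v : ℤ, ∃ x ∈ H, x ≠ 0 ∧ x.valuation = v := ⟨a₀.valuation, a₀, ha₀H, ha₀, rfl⟩
    have hSbdd : ∀ v : ℤ, (∃ x ∈ H, x ≠ 0 ∧ x.valuation = v) → -C ≤ v := by
      rintro v ⟨x, hxH, hx, rfl⟩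
      have h1 : (p : ℝ) ^ (-x.valuation) ≤ (p : ℝ) ^ C := by
        rw [← Padic.norm_eq_zpow_neg_valuation hx]; exact hC x hxH
      have := (zpow_le_zpow_iff_right₀ hp1).1 h1
      omega
    obtain ⟨k, ⟨x, hxH, hx, hxv⟩, hmin⟩ :=
      Int.exists_least_of_bdd (P := fun v => ∃ x ∈ H, x ≠ 0 ∧ x.valuation = v)
        ⟨-C, hSbdd⟩ hSne
    refine ⟨k, ?_⟩
    have hxnorm : ‖x‖ = (p : ℝ) ^ (-k) := by
      rw [Padic.norm_eq_zpow_neg_valuation hx, hxv]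
    ext z
    simp only [SetLike.mem_coe, Set.mem_setOf_eq]
    constructor
    · intro hzH
      by_cases hz : z = 0
      · simp only [hz, norm_zero]
        positivity
      · rw [Padic.norm_eq_zpow_neg_valuation hz]
        have hk : k ≤ z.valuation := hmin _ ⟨z, hzH, hz, rfl⟩
        exact (zpow_le_zpow_iff_right₀ hp1).2 (by omega)
    · intro hz
      exact key x hxH hx z (by rw [hxnorm]; exact hz)
  · -- unbounded: H is dense, hence all of ℚ_p
    right; left
    push_neg at hb
    ext z
    simp only [SetLike.mem_coe, Set.mem_univ, iff_true]
    obtain ⟨C, hC⟩ : ∃ C : ℤ, ‖z‖ ≤ (p : ℝ) ^ C := by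
      by_cases hz : z = 0
      · exact ⟨0, by simp [hz]⟩
      · exact ⟨-z.valuation, le_of_eq (Padic.norm_eq_zpow_neg_valuation hz)⟩
    obtain ⟨a, haH, hna⟩ := hb C
    exact key a haH (by rintro rfl; simp at hna; linarith [zpow_pos (show (0:ℝ) < p by positivity) C]) z (le_trans hC hna.le)
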